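/- arXiv:2604.11345 — 4 statements merged into one kernel-verified Lean document; each statement's English description precedes it below -/
import Mathlib

section
/- Under the unknown-input Weierstrass decomposition, unknown-input historical data, and unknown-input persistent excitation hypotheses, the following three statements are equivalent: (a) there exist matrices A_O ∈ ℝ^{n×n}, B_O^u ∈ ℝ^{n×m}, B_O^y ∈ ℝ^{n×p}, N_O ∈ ℝ^{n×p} such that every trajectory (u, x, y) of the unknown-input descriptor system satisfies x(k+1) = A_O·x(k) + B_O^u·u(k) + B_O^y·y(k) + N_O·y(k+1) for all k ∈ ℕ; (b) every g ∈ ℝ^T with X_p·g = 0, U_p·g = 0, Y_p·g = 0 and Y_f·g = 0 satisfies X_f·g = 0; (c) there exist matrices Σ_{X_p} ∈ ℝ^{n×n}, Σ_{U_p} ∈ ℝ^{n×m}, Σ_{Y_p} ∈ ℝ^{n×p}, Σ_{Y_f} ∈ ℝ^{n×p} with X_f = Σ_{X_p}·X_p + Σ_{U_p}·U_p + Σ_{Y_p}·Y_p + Σ_{Y_f}·Y_f. -/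
/-!
(b) ⇔ (c) is the statement that `ker M ⊆ ker N` iff `N = H M`, applied to the stacked data matrix.

In Weierstrass coordinates `x = P (z₁, z₂)` a trajectory consists of a slow state with
`z₁ (k+1) = A₁ z₁ k + B₁ u k + F₁ η k` and the fast state
`z₂ k = -∑_{j<s} Rʲ (B₂ u (k+j) + F₂ η (k+j))`, so `x k` and `x (k+1)` are determined by the
window `(z₁ k, u k, η k, …, u (k+s), η (k+s))`. The data extend to a trajectory, so (a) gives (c)
column by column. Conversely, trajectories form a shift-invariant linear space, hence for every
`g` the combination `∑ₜ gₜ · (data shifted by t)` is again a trajectory, whose values at times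
0 and 1 are read off from the data matrices applied to `g`. Persistent excitation lets us choose
`g` so that its window at time 0 is the window of an arbitrary trajectory at time `k`; then (c)
applied to `g` is the relation of (a) at time `k`.
-/

open Matrix

noncomputable section

/-- Data matrix of depth `T` whose `k`-th column is `f (k + off)`. -/
def histMat {ι : Type} (T : ℕ) (f : ℕ → ι → ℝ) (off : ℕ) : Matrix ι (Fin T) ℝ :=
  Matrix.of fun i k => f ((k : ℕ) + off) i

/-- A real square matrix is Schur stable if every complex eigenvalue has modulus `< 1`. -/
def SchurStable {n : ℕ} (M : Matrix (Fin n) (Fin n) ℝ) : Prop :=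
  ∀ μ ∈ spectrum ℂ (M.map (fun r : ℝ => (r : ℂ))), ‖μ‖ < 1

/-- View a real matrix as a complex matrix. -/
def cmap {a b : Type} (M : Matrix a b ℝ) : Matrix a b ℂ := M.map (fun r => (r : ℂ))

theorem LinearMap.exists_comp_eq_of_ker_le {K V W U : Type*} [Field K] [AddCommGroup V]
    [Module K V] [AddCommGroup W] [Module K W] [AddCommGroup U] [Module K U]
    {f : V →ₗ[K] W} {g : V →ₗ[K] U} (h : LinearMap.ker f ≤ LinearMap.ker g) :
    ∃ H : W →ₗ[K] U, H ∘ₗ f = g := by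
  obtain ⟨H, hH⟩ := LinearMap.exists_extend
    ((LinearMap.ker f).liftQ g h ∘ₗ f.quotKerEquivRange.symm.toLinearMap)
  refine ⟨H, LinearMap.ext fun v => ?_⟩
  simpa [LinearMap.quotKerEquivRange_symm_apply_image] using
    LinearMap.congr_fun hH ⟨f v, LinearMap.mem_range_self f v⟩

namespace Matrix

variable {K ι a b c : Type*} [Field K] [Fintype ι]

theorem exists_mul_eq_iff_forall_mulVec_eq_zero [DecidableEq ι] [Fintype a] [DecidableEq a]
    {M : Matrix a ι K} {N : Matrix b ι K} :
    (∃ H : Matrix b a K, H * M = N) ↔ ∀ g, M *ᵥ g = 0 → N *ᵥ g = 0 := by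
  refine ⟨fun ⟨H, hH⟩ g hg => by rw [← hH, ← mulVec_mulVec, hg, mulVec_zero], fun h => ?_⟩
  obtain ⟨H, hH⟩ := LinearMap.exists_comp_eq_of_ker_le (f := toLin' M) (g := toLin' N)
    fun g hg => h g hg
  refine ⟨LinearMap.toMatrix' H, ?_⟩
  rw [← LinearMap.toMatrix'_toLin' M, ← LinearMap.toMatrix'_comp, hH, LinearMap.toMatrix'_toLin']

theorem forall_mulVec_eq_zero_imp_iff_exists_combination [DecidableEq ι] [Fintype a]
    [DecidableEq a] [Fintype b] [DecidableEq b] [Fintype c] [DecidableEq c]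
    (X₀ X₁ : Matrix a ι K) (U : Matrix b ι K) (Y₀ Y₁ : Matrix c ι K) :
    (∀ g, X₀ *ᵥ g = 0 → U *ᵥ g = 0 → Y₀ *ᵥ g = 0 → Y₁ *ᵥ g = 0 → X₁ *ᵥ g = 0) ↔
      ∃ (S₁ : Matrix a a K) (S₂ : Matrix a b K) (S₃ S₄ : Matrix a c K),
        X₁ = S₁ * X₀ + S₂ * U + S₃ * Y₀ + S₄ * Y₁ := by
  set M := fromRows (fromRows X₀ U) (fromRows Y₀ Y₁)
  have hM : ∀ g, M *ᵥ g = 0 ↔ X₀ *ᵥ g = 0 ∧ U *ᵥ g = 0 ∧ Y₀ *ᵥ g = 0 ∧ Y₁ *ᵥ g = 0 := by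
    intro g
    simp only [M, fromRows_mulVec, ← Sum.elim_zero_zero, Sum.elim_eq_iff, and_assoc]
  calc _ ↔ ∀ g, M *ᵥ g = 0 → X₁ *ᵥ g = 0 := by simp only [hM, and_imp]
    _ ↔ ∃ H, H * M = X₁ := exists_mul_eq_iff_forall_mulVec_eq_zero.symm
    _ ↔ _ := by
      constructor
      · rintro ⟨H, rfl⟩
        refine ⟨H.toCols₁.toCols₁, H.toCols₁.toCols₂, H.toCols₂.toCols₁, H.toCols₂.toCols₂, ?_⟩
        conv_lhs =>
          rw [← fromCols_toCols H, ← fromCols_toCols H.toCols₁, ← fromCols_toCols H.toCols₂]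
        simp only [M, fromCols_mul_fromRows, add_assoc]
      · rintro ⟨S₁, S₂, S₃, S₄, rfl⟩
        exact ⟨fromCols (fromCols S₁ S₂) (fromCols S₃ S₄),
          by simp only [M, fromCols_mul_fromRows, add_assoc]⟩

theorem mulVec_surjective_of_rank_eq_card [Fintype a] {M : Matrix a ι K}
    (h : M.rank = Fintype.card a) : Function.Surjective M.mulVec :=
  LinearMap.range_eq_top.mp <| Submodule.eq_top_of_finrank_eq <|
    h.trans (Module.finrank_fintype_fun_eq_card K).symm

end Matrix

section FastResponse

variable {K n : Type*} [CommRing K] [Fintype n] [DecidableEq n] {N : Matrix n n K} {s : ℕ}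

def fastResponse (N : Matrix n n K) (s : ℕ) (v : ℕ → n → K) (k : ℕ) : n → K :=
  -∑ j ∈ Finset.range s, N ^ j *ᵥ v (k + j)

theorem fastResponse_congr {v v' : ℕ → n → K} {k k' : ℕ}
    (h : ∀ j < s, v (k + j) = v' (k' + j)) : fastResponse N s v k = fastResponse N s v' k' := by
  unfold fastResponse
  rw [Finset.sum_congr rfl fun j hj => by rw [h j (Finset.mem_range.mp hj)]]

theorem mulVec_fastResponse_succ (hN : N ^ s = 0) (v : ℕ → n → K) (k : ℕ) :
    N *ᵥ fastResponse N s v (k + 1) = fastResponse N s v k + v k := by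
  have h := (Finset.sum_range_succ' (fun j => N ^ j *ᵥ v (k + j)) s).symm.trans
    (Finset.sum_range_succ _ s)
  simp only [hN, zero_mulVec, add_zero, pow_zero, one_mulVec] at h
  simp only [fastResponse, mulVec_neg, mulVec_sum, mulVec_mulVec, ← pow_succ', ← h,
    Nat.add_right_comm k 1, add_assoc k]
  abel

theorem eq_fastResponse (hN : N ^ s = 0) {z v : ℕ → n → K}
    (h : ∀ k, N *ᵥ z (k + 1) = z k + v k) (k : ℕ) : z k = fastResponse N s v k := by
  have key : ∀ t k, z k = N ^ t *ᵥ z (k + t) - ∑ j ∈ Finset.range t, N ^ j *ᵥ v (k + j) := by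
    intro t
    induction t with
    | zero => simp
    | succ t ih =>
      intro k
      rw [ih k, Finset.sum_range_succ, pow_succ, ← mulVec_mulVec, ← add_assoc, h, mulVec_add]
      abel
  simpa [hN, fastResponse] using key s k

end FastResponse

section Weierstrass

variable {K n n₁ n₂ m q : Type*} {s : ℕ}

/-- The column at time `k` of the persistent-excitation matrix,
`col (z, u k, η k, …, u (k+s), η (k+s))`. -/
def window (s : ℕ) (z : n₁ → K) (u : ℕ → m → K) (η : ℕ → q → K) (k : ℕ) :
    n₁ ⊕ (Fin (s + 1) × (m ⊕ q)) → K :=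
  Sum.elim z fun jl => Sum.elim (u (k + jl.1)) (η (k + jl.1)) jl.2

theorem eq_of_window_eq {z z' : n₁ → K} {u u' : ℕ → m → K} {η η' : ℕ → q → K} {k k' : ℕ}
    (h : window s z u η k = window s z' u' η' k') :
    z = z' ∧ ∀ j ≤ s, u (k + j) = u' (k' + j) ∧ η (k + j) = η' (k' + j) := by
  rw [window, window, Sum.elim_eq_iff] at h
  refine ⟨h.1, fun j hj => ⟨funext fun i => ?_, funext fun i => ?_⟩⟩
  · exact congrFun h.2 (⟨j, Nat.lt_succ_of_le hj⟩, Sum.inl i)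
  · exact congrFun h.2 (⟨j, Nat.lt_succ_of_le hj⟩, Sum.inr i)

variable [Field K] [Fintype n] [Fintype m] [Fintype q]

def IsTrajectory (E A : Matrix n n K) (B : Matrix n m K) (F : Matrix n q K)
    (u : ℕ → m → K) (x : ℕ → n → K) (η : ℕ → q → K) : Prop :=
  ∀ k, E *ᵥ x (k + 1) = A *ᵥ x k + B *ᵥ u k + F *ᵥ η k

variable [DecidableEq n]

def slowRows (P : Matrix n n K) (e : n₁ ⊕ n₂ ≃ n) : Matrix n₁ n K :=
  P⁻¹.submatrix (e ∘ Sum.inl) id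

theorem slowRows_mulVec_mulVec {P : Matrix n n K} (hP : IsUnit P) (e : n₁ ⊕ n₂ ≃ n)
    (a : n₁ → K) (b : n₂ → K) : slowRows P e *ᵥ (P *ᵥ (Sum.elim a b ∘ e.symm)) = a := by
  ext i
  change (P⁻¹ *ᵥ (P *ᵥ _)) (e (Sum.inl i)) = a i
  rw [mulVec_mulVec, nonsing_inv_mul P ((isUnit_iff_isUnit_det P).mp hP), one_mulVec]
  simp

variable [Fintype n₁] [DecidableEq n₁] [Fintype n₂] [DecidableEq n₂]

structure IsWeierstrassForm (s : ℕ) (E A : Matrix n n K) (B : Matrix n m K) (F : Matrix n q K)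
    (S P : Matrix n n K) (e : n₁ ⊕ n₂ ≃ n) (A₁ : Matrix n₁ n₁ K) (R : Matrix n₂ n₂ K)
    (B₁ : Matrix n₁ m K) (B₂ : Matrix n₂ m K) (F₁ : Matrix n₁ q K) (F₂ : Matrix n₂ q K) :
    Prop where
  isUnit_S : IsUnit S
  isUnit_P : IsUnit P
  pow_R : R ^ s = 0
  E_eq : (S * E * P).submatrix e e = fromBlocks 1 0 0 R
  A_eq : (S * A * P).submatrix e e = fromBlocks A₁ 0 0 1
  B_eq : (S * B).submatrix e id = fromRows B₁ B₂
  F_eq : (S * F).submatrix e id = fromRows F₁ F₂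

namespace IsWeierstrassForm

variable {E A : Matrix n n K} {B : Matrix n m K} {F : Matrix n q K} {S P : Matrix n n K}
  {e : n₁ ⊕ n₂ ≃ n} {A₁ : Matrix n₁ n₁ K} {R : Matrix n₂ n₂ K} {B₁ : Matrix n₁ m K}
  {B₂ : Matrix n₂ m K} {F₁ : Matrix n₁ q K} {F₂ : Matrix n₂ q K}
  (hW : IsWeierstrassForm s E A B F S P e A₁ R B₁ B₂ F₁ F₂)
include hW

theorem step_iff (a₁ b₁ : n₁ → K) (a₂ b₂ : n₂ → K) (u : m → K) (η : q → K) :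
    E *ᵥ (P *ᵥ (Sum.elim b₁ b₂ ∘ e.symm))
        = A *ᵥ (P *ᵥ (Sum.elim a₁ a₂ ∘ e.symm)) + B *ᵥ u + F *ᵥ η
      ↔ b₁ = A₁ *ᵥ a₁ + B₁ *ᵥ u + F₁ *ᵥ η ∧ R *ᵥ b₂ = a₂ + B₂ *ᵥ u + F₂ *ᵥ η := by
  have hS : Function.Injective fun v => (S *ᵥ v) ∘ e :=
    e.surjective.injective_comp_right.comp (mulVec_injective_iff_isUnit.mpr hW.isUnit_S)
  have hSMP : ∀ (M : Matrix n n K) (w : n₁ ⊕ n₂ → K),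
      (S *ᵥ (M *ᵥ (P *ᵥ (w ∘ e.symm)))) ∘ e = (S * M * P).submatrix e e *ᵥ w := by
    intro M w
    rw [submatrix_mulVec_equiv, mulVec_mulVec, mulVec_mulVec]
  have hSB : (S *ᵥ (B *ᵥ u)) ∘ e = fromRows B₁ B₂ *ᵥ u := by
    rw [mulVec_mulVec, ← hW.B_eq]; rfl
  have hSF : (S *ᵥ (F *ᵥ η)) ∘ e = fromRows F₁ F₂ *ᵥ η := by
    rw [mulVec_mulVec, ← hW.F_eq]; rfl
  rw [← hS.eq_iff]
  simp only [mulVec_add, Pi.add_comp, hSMP, hSB, hSF, hW.E_eq, hW.A_eq, fromBlocks_mulVec,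
    fromRows_mulVec, Sum.elim_comp_inl, Sum.elim_comp_inr, one_mulVec, zero_mulVec, add_zero,
    zero_add, ← Sum.elim_add_add, Sum.elim_eq_iff]

theorem isTrajectory_iff {u : ℕ → m → K} {x : ℕ → n → K} {η : ℕ → q → K} :
    IsTrajectory E A B F u x η ↔ ∃ z : ℕ → n₁ → K,
      (∀ k, z (k + 1) = A₁ *ᵥ z k + B₁ *ᵥ u k + F₁ *ᵥ η k) ∧
      ∀ k, x k = P *ᵥ
        (Sum.elim (z k) (fastResponse R s (fun k => B₂ *ᵥ u k + F₂ *ᵥ η k) k) ∘ e.symm) := by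
  constructor
  · intro hx
    set w : ℕ → n₁ ⊕ n₂ → K := fun k => (P⁻¹ *ᵥ x k) ∘ e
    have hxw : ∀ k, x k = P *ᵥ (Sum.elim (w k ∘ Sum.inl) (w k ∘ Sum.inr) ∘ e.symm) := by
      intro k
      rw [Sum.elim_comp_inl_inr, Function.comp_assoc, e.self_comp_symm, Function.comp_id,
        mulVec_mulVec, mul_nonsing_inv P ((isUnit_iff_isUnit_det P).mp hW.isUnit_P), one_mulVec]
    have hstep := fun k => (hW.step_iff (w k ∘ Sum.inl) (w (k + 1) ∘ Sum.inl) (w k ∘ Sum.inr)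
      (w (k + 1) ∘ Sum.inr) (u k) (η k)).mp (by rw [← hxw, ← hxw]; exact hx k)
    refine ⟨fun k => w k ∘ Sum.inl, fun k => (hstep k).1, fun k => ?_⟩
    rw [hxw k, ← eq_fastResponse (z := fun k => w k ∘ Sum.inr) hW.pow_R
      fun k => by rw [(hstep k).2, add_assoc]]
  · rintro ⟨z, hz, hxz⟩ k
    rw [hxz, hxz, hW.step_iff]
    exact ⟨hz k, by rw [mulVec_fastResponse_succ hW.pow_R, add_assoc]⟩

theorem exists_isTrajectory_extending {T : ℕ} {u : ℕ → m → K} {η : ℕ → q → K}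
    {z₁ : ℕ → n₁ → K} {z₂ : ℕ → n₂ → K} {x : ℕ → n → K}
    (hz₁ : ∀ k < T, z₁ (k + 1) = A₁ *ᵥ z₁ k + B₁ *ᵥ u k + F₁ *ᵥ η k)
    (hz₂ : ∀ k ≤ T, z₂ k = fastResponse R s (fun k => B₂ *ᵥ u k + F₂ *ᵥ η k) k)
    (hx : ∀ k ≤ T, x k = P *ᵥ (Sum.elim (z₁ k) (z₂ k) ∘ e.symm)) :
    ∃ x' : ℕ → n → K, IsTrajectory E A B F u x' η ∧ ∀ k ≤ T, x' k = x k := by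
  let z : ℕ → n₁ → K :=
    fun k => Nat.rec (z₁ 0) (fun k zk => A₁ *ᵥ zk + B₁ *ᵥ u k + F₁ *ᵥ η k) k
  have hz : ∀ k ≤ T, z k = z₁ k := by
    intro k
    induction k with
    | zero => intro _; rfl
    | succ k ih => intro hk; rw [hz₁ k hk, ← ih (Nat.le_of_succ_le hk)]
  refine ⟨_, hW.isTrajectory_iff.mpr ⟨z, fun k => rfl, fun k => rfl⟩, fun k hk => ?_⟩
  rw [hx k hk, hz k hk, hz₂ k hk]

theorem state_eq_of_window_eq {u u' : ℕ → m → K} {x x' : ℕ → n → K} {η η' : ℕ → q → K}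
    (hx : IsTrajectory E A B F u x η) (hx' : IsTrajectory E A B F u' x' η') {k k' : ℕ}
    (h : window s (slowRows P e *ᵥ x k) u η k = window s (slowRows P e *ᵥ x' k') u' η' k') :
    x k = x' k' ∧ x (k + 1) = x' (k' + 1) := by
  obtain ⟨z, hz, hxz⟩ := hW.isTrajectory_iff.mp hx
  obtain ⟨z', hz', hxz'⟩ := hW.isTrajectory_iff.mp hx'
  rw [hxz, hxz', slowRows_mulVec_mulVec hW.isUnit_P, slowRows_mulVec_mulVec hW.isUnit_P] at h
  obtain ⟨hz₀, hin⟩ := eq_of_window_eq h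
  set v := fun k => B₂ *ᵥ u k + F₂ *ᵥ η k
  set v' := fun k => B₂ *ᵥ u' k + F₂ *ᵥ η' k
  have hv : ∀ j ≤ s, v (k + j) = v' (k' + j) := fun j hj => by simp only [v, v', hin j hj]
  have hfast₀ : fastResponse R s v k = fastResponse R s v' k' :=
    fastResponse_congr fun j hj => hv j hj.le
  have hfast₁ : fastResponse R s v (k + 1) = fastResponse R s v' (k' + 1) :=
    fastResponse_congr fun j hj => by
      simpa only [add_assoc, add_comm 1 j] using hv (1 + j) (by omega)
  obtain ⟨hu₀, hη₀⟩ := hin 0 (Nat.zero_le s)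
  rw [add_zero, add_zero] at hu₀ hη₀
  rw [hxz, hxz, hxz', hxz', hz, hz', hz₀, hu₀, hη₀, hfast₀, hfast₁]
  exact ⟨rfl, rfl⟩

end IsWeierstrassForm

end Weierstrass

section HistoricalData

variable {ι κ : Type} {T : ℕ}

theorem histMat_congr {f f' : ℕ → ι → ℝ} {off : ℕ} (h : ∀ k < T, f (k + off) = f' (k + off)) :
    histMat T f off = histMat T f' off := by
  ext i t
  simp [histMat, h t t.isLt]

theorem histMat_add (f f' : ℕ → ι → ℝ) (off : ℕ) :
    histMat T (f + f') off = histMat T f off + histMat T f' off := by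
  ext i t
  simp [histMat]

theorem mul_histMat [Fintype ι] (M : Matrix κ ι ℝ) (f : ℕ → ι → ℝ) (off : ℕ) :
    M * histMat T f off = histMat T (fun k => M *ᵥ f k) off := by
  ext i t
  simp [histMat, mul_apply, mulVec, dotProduct]

variable {n n₁ n₂ m q p : Type}

theorem of_window_mulVec {s : ℕ} (z : ℕ → n₁ → ℝ) (u : ℕ → m → ℝ) (η : ℕ → q → ℝ)
    (g : Fin T → ℝ) :
    (Matrix.of fun i (t : Fin T) => window s (z t) u η t i) *ᵥ g
      = window s (histMat T z 0 *ᵥ g) (fun k => histMat T u k *ᵥ g)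
          (fun k => histMat T η k *ᵥ g) 0 := by
  ext (i | ⟨j, i | i⟩) <;> simp [window, histMat, mulVec, dotProduct, mul_comm]

variable [Fintype n] [Fintype m] [Fintype q] [Fintype p]

theorem histMat_one_eq {x : ℕ → n → ℝ} {u : ℕ → m → ℝ} {y : ℕ → p → ℝ}
    {M₁ : Matrix n n ℝ} {M₂ : Matrix n m ℝ} {M₃ M₄ : Matrix n p ℝ}
    (h : ∀ k, x (k + 1) = M₁ *ᵥ x k + M₂ *ᵥ u k + M₃ *ᵥ y k + M₄ *ᵥ y (k + 1)) :
    histMat T x 1 = M₁ * histMat T x 0 + M₂ * histMat T u 0 + M₃ * histMat T y 0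
      + M₄ * histMat T y 1 := by
  simp only [mul_histMat, ← histMat_add]
  ext i t
  exact congrFun (h t) i

variable {s : ℕ} {E A : Matrix n n ℝ} {B : Matrix n m ℝ} {F : Matrix n q ℝ}

theorem IsTrajectory.histMat {u : ℕ → m → ℝ} {x : ℕ → n → ℝ} {η : ℕ → q → ℝ}
    (h : IsTrajectory E A B F u x η) (g : Fin T → ℝ) :
    IsTrajectory E A B F (fun k => histMat T u k *ᵥ g) (fun k => histMat T x k *ᵥ g)
      (fun k => histMat T η k *ᵥ g) := by
  intro k
  simp only [mulVec_mulVec, mul_histMat, ← add_mulVec, ← histMat_add]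
  congr 1
  ext i t
  exact congrFun (h (t + k)) i

variable [DecidableEq n] [Fintype n₁] [DecidableEq n₁] [Fintype n₂] [DecidableEq n₂]

theorem IsWeierstrassForm.relation_of_persistentlyExciting {S P : Matrix n n ℝ}
    {e : n₁ ⊕ n₂ ≃ n} {A₁ : Matrix n₁ n₁ ℝ} {R : Matrix n₂ n₂ ℝ} {B₁ : Matrix n₁ m ℝ}
    {B₂ : Matrix n₂ m ℝ} {F₁ : Matrix n₁ q ℝ} {F₂ : Matrix n₂ q ℝ}
    (hW : IsWeierstrassForm s E A B F S P e A₁ R B₁ B₂ F₁ F₂)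
    {ud : ℕ → m → ℝ} {xd : ℕ → n → ℝ} {ηd : ℕ → q → ℝ} (hd : IsTrajectory E A B F ud xd ηd)
    (hPE : Function.Surjective
      (Matrix.of fun i (t : Fin T) => window s (slowRows P e *ᵥ xd t) ud ηd t i).mulVec)
    {C : Matrix p n ℝ} {S₁ : Matrix n n ℝ} {S₂ : Matrix n m ℝ} {S₃ S₄ : Matrix n p ℝ}
    (hS : histMat T xd 1 = S₁ * histMat T xd 0 + S₂ * histMat T ud 0
      + S₃ * (C * histMat T xd 0) + S₄ * (C * histMat T xd 1))
    {u : ℕ → m → ℝ} {x : ℕ → n → ℝ} {η : ℕ → q → ℝ} (hx : IsTrajectory E A B F u x η)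
    (k : ℕ) :
    x (k + 1) = S₁ *ᵥ x k + S₂ *ᵥ u k + S₃ *ᵥ (C *ᵥ x k) + S₄ *ᵥ (C *ᵥ x (k + 1)) := by
  obtain ⟨g, hg⟩ := hPE (window s (slowRows P e *ᵥ x k) u η k)
  rw [of_window_mulVec (fun t => slowRows P e *ᵥ xd t), ← mul_histMat, ← mulVec_mulVec] at hg
  obtain ⟨h₀, h₁⟩ := hW.state_eq_of_window_eq hx (hd.histMat g) hg.symm
  have hu := ((eq_of_window_eq hg).2 0 (Nat.zero_le s)).1
  rw [add_zero, add_zero] at hu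
  rw [h₀, h₁, ← hu, zero_add]
  conv_lhs => rw [hS]
  simp only [add_mulVec, mulVec_mulVec]

end HistoricalData

theorem stmt_10_general (n1 n2 s m p q T : ℕ)
    (E A : Matrix (Fin (n1 + n2)) (Fin (n1 + n2)) ℝ)
    (B : Matrix (Fin (n1 + n2)) (Fin m) ℝ)
    (F : Matrix (Fin (n1 + n2)) (Fin q) ℝ)
    (C : Matrix (Fin p) (Fin (n1 + n2)) ℝ)
    (S P : Matrix (Fin (n1 + n2)) (Fin (n1 + n2)) ℝ)
    (hS : IsUnit S) (hP : IsUnit P)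
    (A1 : Matrix (Fin n1) (Fin n1) ℝ) (R : Matrix (Fin n2) (Fin n2) ℝ)
    (B1 : Matrix (Fin n1) (Fin m) ℝ) (B2 : Matrix (Fin n2) (Fin m) ℝ)
    (F1 : Matrix (Fin n1) (Fin q) ℝ) (F2 : Matrix (Fin n2) (Fin q) ℝ)
    (hR : R ^ s = 0)
    (hE : (S * E * P).submatrix ⇑finSumFinEquiv ⇑finSumFinEquiv = Matrix.fromBlocks 1 0 0 R)
    (hA : (S * A * P).submatrix ⇑finSumFinEquiv ⇑finSumFinEquiv = Matrix.fromBlocks A1 0 0 1)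
    (hB : (S * B).submatrix ⇑finSumFinEquiv id = Matrix.fromRows B1 B2)
    (hFdec : (S * F).submatrix ⇑finSumFinEquiv id = Matrix.fromRows F1 F2)
    (ud : ℕ → Fin m → ℝ) (etad : ℕ → Fin q → ℝ)
    (z1d : ℕ → Fin n1 → ℝ) (z2d : ℕ → Fin n2 → ℝ)
    (xd : ℕ → Fin (n1 + n2) → ℝ) (yd : ℕ → Fin p → ℝ)
    (hz1 : ∀ k < T, z1d (k + 1) = A1 *ᵥ z1d k + B1 *ᵥ ud k + F1 *ᵥ etad k)
    (hz2 : ∀ k ≤ T, z2d k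
      = -(∑ j ∈ Finset.range s, (R ^ j *ᵥ (B2 *ᵥ ud (k + j) + F2 *ᵥ etad (k + j)))))
    (hxd : ∀ k ≤ T, xd k = P *ᵥ (fun i => Sum.elim (z1d k) (z2d k) (finSumFinEquiv.symm i)))
    (hyd : ∀ k ≤ T, yd k = C *ᵥ xd k)
    (hPE : (Matrix.of fun (i : Fin n1 ⊕ (Fin (s + 1) × (Fin m ⊕ Fin q))) (k : Fin T) =>
        Sum.elim (z1d (k : ℕ))
          (fun jl => Sum.elim (ud ((k : ℕ) + (jl.1 : ℕ))) (etad ((k : ℕ) + (jl.1 : ℕ))) jl.2)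
          i).rank = n1 + (s + 1) * (m + q))
    :
    ((∃ (AO : Matrix (Fin (n1 + n2)) (Fin (n1 + n2)) ℝ)
        (BOu : Matrix (Fin (n1 + n2)) (Fin m) ℝ)
        (BOy NO : Matrix (Fin (n1 + n2)) (Fin p) ℝ),
        ∀ (u : ℕ → Fin m → ℝ) (x : ℕ → Fin (n1 + n2) → ℝ) (y : ℕ → Fin p → ℝ),
          ((∃ η : ℕ → Fin q → ℝ,
              ∀ k : ℕ, E *ᵥ x (k + 1) = A *ᵥ x k + B *ᵥ u k + F *ᵥ η k) ∧
            (∀ k : ℕ, y k = C *ᵥ x k)) →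
          ∀ k : ℕ, x (k + 1) = AO *ᵥ x k + BOu *ᵥ u k + BOy *ᵥ y k + NO *ᵥ y (k + 1))
      ↔ (∀ g : Fin T → ℝ, histMat T xd 0 *ᵥ g = 0 → histMat T ud 0 *ᵥ g = 0 →
          histMat T yd 0 *ᵥ g = 0 → histMat T yd 1 *ᵥ g = 0 → histMat T xd 1 *ᵥ g = 0))
    ∧ ((∀ g : Fin T → ℝ, histMat T xd 0 *ᵥ g = 0 → histMat T ud 0 *ᵥ g = 0 →
          histMat T yd 0 *ᵥ g = 0 → histMat T yd 1 *ᵥ g = 0 → histMat T xd 1 *ᵥ g = 0)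
      ↔ (∃ (SXp : Matrix (Fin (n1 + n2)) (Fin (n1 + n2)) ℝ)
            (SUp : Matrix (Fin (n1 + n2)) (Fin m) ℝ)
            (SYp SYf : Matrix (Fin (n1 + n2)) (Fin p) ℝ),
          histMat T xd 1 = SXp * histMat T xd 0 + SUp * histMat T ud 0
            + SYp * histMat T yd 0 + SYf * histMat T yd 1)) := by
  have hW : IsWeierstrassForm s E A B F S P finSumFinEquiv A1 R B1 B2 F1 F2 :=
    ⟨hS, hP, hR, hE, hA, hB, hFdec⟩
  obtain ⟨xe, hxe, hxe_eq⟩ := hW.exists_isTrajectory_extending hz1 hz2 hxd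
  have hX : ∀ off ≤ 1, histMat T xd off = histMat T xe off := fun off hoff =>
    histMat_congr fun t ht => (hxe_eq _ (by omega)).symm
  have hY : ∀ off ≤ 1, histMat T yd off = C * histMat T xe off := fun off hoff => by
    rw [mul_histMat]
    exact histMat_congr fun t ht => by rw [hyd _ (by omega), hxe_eq _ (by omega)]
  have hslow : ∀ t ≤ T, slowRows P finSumFinEquiv *ᵥ xe t = z1d t := fun t ht => by
    rw [hxe_eq t ht, hxd t ht]
    exact slowRows_mulVec_mulVec hP _ _ _
  have hPE' : Function.Surjective (Matrix.of fun i (t : Fin T) =>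
      window s (slowRows P finSumFinEquiv *ᵥ xe t) ud etad t i).mulVec := by
    refine Matrix.mulVec_surjective_of_rank_eq_card (Eq.trans ?_ (hPE.trans (by simp)))
    congr
    ext i t
    simp only [window, hslow t t.isLt.le]
  rw [hX 0 zero_le_one, hX 1 le_rfl, hY 0 zero_le_one, hY 1 le_rfl]
  have hbc := Matrix.forall_mulVec_eq_zero_imp_iff_exists_combination (histMat T xe 0)
    (histMat T xe 1) (histMat T ud 0) (C * histMat T xe 0) (C * histMat T xe 1)
  refine ⟨⟨fun ⟨AO, BOu, BOy, NO, hobs⟩ => hbc.2 ⟨AO, BOu, BOy, NO, ?_⟩, fun hb => ?_⟩, hbc⟩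
  · rw [mul_histMat C, mul_histMat C]
    exact histMat_one_eq (hobs ud xe _ ⟨⟨etad, hxe⟩, fun _ => rfl⟩)
  · obtain ⟨SXp, SUp, SYp, SYf, hfac⟩ := hbc.1 hb
    refine ⟨SXp, SUp, SYp, SYf, fun u x y ⟨⟨η, hx⟩, hy⟩ k => ?_⟩
    rw [hy, hy]
    exact hW.relation_of_persistentlyExciting hxe hPE' hfac hx k

theorem stmt_10 (n1 n2 s m p q T : ℕ) (hs : 1 ≤ s) (hT : 1 ≤ T)
    (E A : Matrix (Fin (n1 + n2)) (Fin (n1 + n2)) ℝ)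
    (B : Matrix (Fin (n1 + n2)) (Fin m) ℝ)
    (F : Matrix (Fin (n1 + n2)) (Fin q) ℝ) (hF : F.rank = q)
    (C : Matrix (Fin p) (Fin (n1 + n2)) ℝ)
    (S P : Matrix (Fin (n1 + n2)) (Fin (n1 + n2)) ℝ)
    (hS : IsUnit S) (hP : IsUnit P)
    (A1 : Matrix (Fin n1) (Fin n1) ℝ) (R : Matrix (Fin n2) (Fin n2) ℝ)
    (B1 : Matrix (Fin n1) (Fin m) ℝ) (B2 : Matrix (Fin n2) (Fin m) ℝ)
    (F1 : Matrix (Fin n1) (Fin q) ℝ) (F2 : Matrix (Fin n2) (Fin q) ℝ)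
    (C1 : Matrix (Fin p) (Fin n1) ℝ) (C2 : Matrix (Fin p) (Fin n2) ℝ)
    (hR : R ^ s = 0)
    (hE : (S * E * P).submatrix ⇑finSumFinEquiv ⇑finSumFinEquiv = Matrix.fromBlocks 1 0 0 R)
    (hA : (S * A * P).submatrix ⇑finSumFinEquiv ⇑finSumFinEquiv = Matrix.fromBlocks A1 0 0 1)
    (hB : (S * B).submatrix ⇑finSumFinEquiv id = Matrix.fromRows B1 B2)
    (hFdec : (S * F).submatrix ⇑finSumFinEquiv id = Matrix.fromRows F1 F2)
    (hC : (C * P).submatrix id ⇑finSumFinEquiv = Matrix.fromCols C1 C2)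
    (ud : ℕ → Fin m → ℝ) (etad : ℕ → Fin q → ℝ)
    (z1d : ℕ → Fin n1 → ℝ) (z2d : ℕ → Fin n2 → ℝ)
    (xd : ℕ → Fin (n1 + n2) → ℝ) (yd : ℕ → Fin p → ℝ)
    (hz1 : ∀ k < T, z1d (k + 1) = A1 *ᵥ z1d k + B1 *ᵥ ud k + F1 *ᵥ etad k)
    (hz2 : ∀ k ≤ T, z2d k
      = -(∑ j ∈ Finset.range s, (R ^ j *ᵥ (B2 *ᵥ ud (k + j) + F2 *ᵥ etad (k + j)))))
    (hxd : ∀ k ≤ T, xd k = P *ᵥ (fun i => Sum.elim (z1d k) (z2d k) (finSumFinEquiv.symm i)))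
    (hyd : ∀ k ≤ T, yd k = C *ᵥ xd k)
    (hPE : (Matrix.of fun (i : Fin n1 ⊕ (Fin (s + 1) × (Fin m ⊕ Fin q))) (k : Fin T) =>
        Sum.elim (z1d (k : ℕ))
          (fun jl => Sum.elim (ud ((k : ℕ) + (jl.1 : ℕ))) (etad ((k : ℕ) + (jl.1 : ℕ))) jl.2)
          i).rank = n1 + (s + 1) * (m + q))
    :
    ((∃ (AO : Matrix (Fin (n1 + n2)) (Fin (n1 + n2)) ℝ)
        (BOu : Matrix (Fin (n1 + n2)) (Fin m) ℝ)
        (BOy NO : Matrix (Fin (n1 + n2)) (Fin p) ℝ),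
        ∀ (u : ℕ → Fin m → ℝ) (x : ℕ → Fin (n1 + n2) → ℝ) (y : ℕ → Fin p → ℝ),
          ((∃ η : ℕ → Fin q → ℝ,
              ∀ k : ℕ, E *ᵥ x (k + 1) = A *ᵥ x k + B *ᵥ u k + F *ᵥ η k) ∧
            (∀ k : ℕ, y k = C *ᵥ x k)) →
          ∀ k : ℕ, x (k + 1) = AO *ᵥ x k + BOu *ᵥ u k + BOy *ᵥ y k + NO *ᵥ y (k + 1))
      ↔ (∀ g : Fin T → ℝ, histMat T xd 0 *ᵥ g = 0 → histMat T ud 0 *ᵥ g = 0 →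
          histMat T yd 0 *ᵥ g = 0 → histMat T yd 1 *ᵥ g = 0 → histMat T xd 1 *ᵥ g = 0))
    ∧ ((∀ g : Fin T → ℝ, histMat T xd 0 *ᵥ g = 0 → histMat T ud 0 *ᵥ g = 0 →
          histMat T yd 0 *ᵥ g = 0 → histMat T yd 1 *ᵥ g = 0 → histMat T xd 1 *ᵥ g = 0)
      ↔ (∃ (SXp : Matrix (Fin (n1 + n2)) (Fin (n1 + n2)) ℝ)
            (SUp : Matrix (Fin (n1 + n2)) (Fin m) ℝ)
            (SYp SYf : Matrix (Fin (n1 + n2)) (Fin p) ℝ),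
          histMat T xd 1 = SXp * histMat T xd 0 + SUp * histMat T ud 0
            + SYp * histMat T yd 0 + SYf * histMat T yd 1)) :=
  stmt_10_general n1 n2 s m p q T E A B F C S P hS hP A1 R B1 B2 F1 F2 hR hE hA hB hFdec ud etad z1d
    z2d xd yd hz1 hz2 hxd hyd hPE
end
end

section
/- Let E ∈ ℝ^{n×n}, C ∈ ℝ^{p×n}, and F ∈ ℝ^{n×q} with rank(F) = q. If the (n+p) × (n+q) block matrix [[E, F], [C, 0]] has rank n + q, then there exist matrices T̄ ∈ ℝ^{n×n} and N̄ ∈ ℝ^{n×p} such that T̄·E + N̄·C = I_n and T̄·F = 0. -/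
open Matrix

noncomputable section

/-!
The block matrix `M = [[E, F], [C, 0]]` has full column rank, so it has a left inverse `L`.
Reading `L * M = 1` block by block, the top block row `[T̄, N̄]` of `L` satisfies
`T̄ * E + N̄ * C = 1` and `T̄ * F + N̄ * 0 = 0`.
-/

namespace Matrix

variable {K R : Type*} {m n l o : Type*}

theorem mulVecLin_injective_of_rank_eq_card_width [Field K] [Finite m] [Fintype n]
    {A : Matrix m n K} (hA : A.rank = Fintype.card n) :
    Function.Injective A.mulVecLin := by
  rw [← LinearMap.ker_eq_bot, ← Submodule.finrank_eq_zero]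
  have := LinearMap.finrank_range_add_finrank_ker A.mulVecLin
  rw [← Matrix.rank, hA, Module.finrank_fintype_fun_eq_card] at this
  omega

theorem exists_mul_eq_one_of_rank_eq_card_width [Field K] [Fintype m] [DecidableEq m]
    [Fintype n] [DecidableEq n] {A : Matrix m n K} (hA : A.rank = Fintype.card n) :
    ∃ L : Matrix n m K, L * A = 1 := by
  obtain ⟨g, hg⟩ := A.mulVecLin.exists_leftInverse_of_injective
    (LinearMap.ker_eq_bot.mpr (mulVecLin_injective_of_rank_eq_card_width hA))
  refine ⟨LinearMap.toMatrix' g, ?_⟩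
  rw [← LinearMap.toMatrix'_toLin' A, ← LinearMap.toMatrix'_comp, Matrix.toLin'_apply', hg,
    LinearMap.toMatrix'_id]

theorem exists_top_row_of_mul_fromBlocks_zero_eq_one [Ring R] [Fintype n] [Fintype l]
    [DecidableEq n] [DecidableEq o] {E : Matrix n n R} {F : Matrix n o R} {C : Matrix l n R}
    {L : Matrix (n ⊕ o) (n ⊕ l) R} (hL : L * fromBlocks E F C 0 = 1) :
    ∃ (T : Matrix n n R) (N : Matrix n l R), T * E + N * C = 1 ∧ T * F = 0 := by
  rw [← fromBlocks_toBlocks L, fromBlocks_multiply, ← fromBlocks_one] at hL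
  obtain ⟨h₁₁, h₁₂, -, -⟩ := fromBlocks_inj.mp hL
  exact ⟨L.toBlocks₁₁, L.toBlocks₁₂, h₁₁, by simpa only [Matrix.mul_zero, add_zero] using h₁₂⟩

end Matrix

theorem stmt_13_general (n p q : ℕ)
    (E : Matrix (Fin n) (Fin n) ℝ) (C : Matrix (Fin p) (Fin n) ℝ)
    (F : Matrix (Fin n) (Fin q) ℝ)
    (hblk : (Matrix.fromBlocks E F C 0).rank = n + q) :
    ∃ (Tbar : Matrix (Fin n) (Fin n) ℝ) (Nbar : Matrix (Fin n) (Fin p) ℝ),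
      Tbar * E + Nbar * C = 1 ∧ Tbar * F = 0 := by
  have hfull : (Matrix.fromBlocks E F C 0).rank = Fintype.card (Fin n ⊕ Fin q) := by
    simpa using hblk
  obtain ⟨L, hL⟩ := exists_mul_eq_one_of_rank_eq_card_width hfull
  exact exists_top_row_of_mul_fromBlocks_zero_eq_one hL

theorem stmt_13 (n p q : ℕ)
    (E : Matrix (Fin n) (Fin n) ℝ) (C : Matrix (Fin p) (Fin n) ℝ)
    (F : Matrix (Fin n) (Fin q) ℝ) (hF : F.rank = q)
    (hblk : (Matrix.fromBlocks E F C 0).rank = n + q) :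
    ∃ (Tbar : Matrix (Fin n) (Fin n) ℝ) (Nbar : Matrix (Fin n) (Fin p) ℝ),
      Tbar * E + Nbar * C = 1 ∧ Tbar * F = 0 :=
  stmt_13_general n p q E C F hblk
end
end

section
/- Assume the unknown-input Weierstrass decomposition hypothesis. Then the rank of the (n+p) × (n+q) block matrix [[E, F], [C, 0]] equals n1 + rank of the (n2+p) × (n2+q) block matrix [[R, F2], [C2, −C1·F1]]. -/
/-!
Multiplying `[[E, F], [C, 0]]` by the invertible matrices `diag(S, I)` on the left and
`diag(P, I)` on the right and regrouping the indices as `n1 ⊕ (n2 ⊕ p)` and `n1 ⊕ (n2 ⊕ q)`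
gives `[[I, [0, F1]], [[0; C1], [[R, F2], [C2, 0]]]]`. Eliminating the identity block leaves its
Schur complement `[[R, F2], [C2, 0]] - [0; C1] [0, F1] = [[R, F2], [C2, -C1 F1]]`, beside an
`n1 × n1` identity.
-/

open Matrix

noncomputable section

theorem Submodule.finrank_prod {K M N : Type*} [Field K] [AddCommGroup M] [AddCommGroup N]
    [Module K M] [Module K N] [FiniteDimensional K M] [FiniteDimensional K N]
    (p : Submodule K M) (q : Submodule K N) :
    Module.finrank K (p.prod q) = Module.finrank K p + Module.finrank K q := by
  have hrange : LinearMap.range (p.subtype.prodMap q.subtype) = p.prod q := by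
    rw [LinearMap.range_prodMap, Submodule.range_subtype, Submodule.range_subtype]
  rw [← hrange, LinearMap.finrank_range_of_inj
    (p.injective_subtype.prodMap q.injective_subtype), Module.finrank_prod]

namespace Matrix

section Reindexing

variable {α : Type*}

theorem fromBlocks_submatrix_sumCongr {l m n o l' m' n' o' : Type*} (A : Matrix n l α)
    (B : Matrix n m α) (C : Matrix o l α) (D : Matrix o m α) (en : n' ≃ n) (eo : o' ≃ o)
    (el : l' ≃ l) (em : m' ≃ m) :
    (fromBlocks A B C D).submatrix (en.sumCongr eo) (el.sumCongr em) =
      fromBlocks (A.submatrix en el) (B.submatrix en em) (C.submatrix eo el)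
        (D.submatrix eo em) := by
  ext (i | i) (j | j) <;> rfl

theorem fromBlocks_fromBlocks_submatrix_sumAssoc {n₁ n₂ n₃ m₁ m₂ m₃ : Type*}
    (A₁₁ : Matrix n₁ m₁ α) (A₁₂ : Matrix n₁ m₂ α) (A₂₁ : Matrix n₂ m₁ α) (A₂₂ : Matrix n₂ m₂ α)
    (B₁ : Matrix n₁ m₃ α) (B₂ : Matrix n₂ m₃ α) (C₁ : Matrix n₃ m₁ α) (C₂ : Matrix n₃ m₂ α)
    (D : Matrix n₃ m₃ α) :
    (fromBlocks (fromBlocks A₁₁ A₁₂ A₂₁ A₂₂) (fromRows B₁ B₂) (fromCols C₁ C₂) D).submatrix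
        (Equiv.sumAssoc n₁ n₂ n₃).symm (Equiv.sumAssoc m₁ m₂ m₃).symm =
      fromBlocks A₁₁ (fromCols A₁₂ B₁) (fromRows A₂₁ C₁) (fromBlocks A₂₂ B₂ C₂ D) := by
  ext (i | i | i) (j | j | j) <;> rfl

end Reindexing

section Rank

variable {K : Type*} [Field K] {l m n p q : Type*} [Fintype l] [Fintype m] [Fintype n]
  [Fintype p] [Fintype q]

theorem rank_fromBlocks_zero_zero (A : Matrix m n K) (D : Matrix p q K) :
    (fromBlocks A 0 0 D).rank = A.rank + D.rank := by
  let eRows := LinearEquiv.sumArrowLequivProdArrow m p K K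
  let eCols := LinearEquiv.sumArrowLequivProdArrow n q K K
  have hlin : (fromBlocks A 0 0 D).mulVecLin
      = eRows.symm.toLinearMap ∘ₗ (A.mulVecLin.prodMap D.mulVecLin) ∘ₗ eCols.toLinearMap := by
    ext x (i | i) <;> simp [eRows, eCols, fromBlocks_mulVec] <;> rfl
  rw [rank, hlin, LinearMap.range_comp, LinearMap.range_comp, LinearEquiv.range,
    Submodule.map_top, LinearEquiv.finrank_map_eq, LinearMap.range_prodMap,
    Submodule.finrank_prod, rank, rank]

variable [DecidableEq l] [DecidableEq m] [DecidableEq n]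

theorem rank_fromBlocks_one (B : Matrix m n K) (C : Matrix l m K) (D : Matrix l n K) :
    (fromBlocks 1 B C D).rank = Fintype.card m + (D - C * B).rank := by
  let _ : Invertible (1 : Matrix m m K) := invertibleOne
  rw [fromBlocks_eq_of_invertible₁₁, invOf_one, rank_mul_eq_left_of_isUnit_det,
    rank_mul_eq_right_of_isUnit_det, rank_fromBlocks_zero_zero, rank_one, Matrix.mul_one]
  all_goals simp

variable [DecidableEq p] [DecidableEq q]

theorem rank_fromBlocks_mul_mul {S : Matrix m m K} {P : Matrix n n K} (hS : IsUnit S)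
    (hP : IsUnit P) (E : Matrix m n K) (F : Matrix m q K) (C : Matrix p n K)
    (D : Matrix p q K) :
    (fromBlocks (S * E * P) (S * F) (C * P) D).rank = (fromBlocks E F C D).rank := by
  have hfactor : fromBlocks (S * E * P) (S * F) (C * P) D = fromBlocks S 0 0 (1 : Matrix p p K) *
      fromBlocks E F C D * fromBlocks P 0 0 (1 : Matrix q q K) := by
    simp [fromBlocks_multiply]
  rw [hfactor, rank_mul_eq_left_of_isUnit_det, rank_mul_eq_right_of_isUnit_det]
  · simpa [det_fromBlocks_zero₂₁] using (isUnit_iff_isUnit_det S).mp hS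
  · simpa [det_fromBlocks_zero₂₁] using (isUnit_iff_isUnit_det P).mp hP

end Rank

end Matrix

theorem stmt_15_general (n1 n2 p q : ℕ)
    (E : Matrix (Fin (n1 + n2)) (Fin (n1 + n2)) ℝ)
    (F : Matrix (Fin (n1 + n2)) (Fin q) ℝ)
    (C : Matrix (Fin p) (Fin (n1 + n2)) ℝ)
    (S P : Matrix (Fin (n1 + n2)) (Fin (n1 + n2)) ℝ)
    (hS : IsUnit S) (hP : IsUnit P)
    (R : Matrix (Fin n2) (Fin n2) ℝ)
    (F1 : Matrix (Fin n1) (Fin q) ℝ) (F2 : Matrix (Fin n2) (Fin q) ℝ)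
    (C1 : Matrix (Fin p) (Fin n1) ℝ) (C2 : Matrix (Fin p) (Fin n2) ℝ)
    (hE : (S * E * P).submatrix ⇑finSumFinEquiv ⇑finSumFinEquiv = Matrix.fromBlocks 1 0 0 R)
    (hFdec : (S * F).submatrix ⇑finSumFinEquiv id = Matrix.fromRows F1 F2)
    (hC : (C * P).submatrix id ⇑finSumFinEquiv = Matrix.fromCols C1 C2)
    :
    (Matrix.fromBlocks E F C 0).rank
      = n1 + (Matrix.fromBlocks R F2 C2 (-(C1 * F1))).rank := by
  have hweierstrass : (fromBlocks (S * E * P) (S * F) (C * P) 0).submatrix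
      (finSumFinEquiv.sumCongr (Equiv.refl (Fin p)))
      (finSumFinEquiv.sumCongr (Equiv.refl (Fin q))) =
      fromBlocks (fromBlocks 1 0 0 R) (fromRows F1 F2) (fromCols C1 C2) 0 := by
    simp only [fromBlocks_submatrix_sumCongr, Equiv.coe_refl]
    rw [hE, hFdec, hC, submatrix_id_id]
  rw [← rank_fromBlocks_mul_mul hS hP, ← rank_submatrix _ (finSumFinEquiv.sumCongr (.refl _))
    (finSumFinEquiv.sumCongr (.refl _)), hweierstrass,
    ← rank_submatrix _ (Equiv.sumAssoc _ _ _).symm (Equiv.sumAssoc _ _ _).symm,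
    fromBlocks_fromBlocks_submatrix_sumAssoc, rank_fromBlocks_one, Fintype.card_fin,
    fromRows_mul_fromCols, sub_eq_add_neg, fromBlocks_neg, fromBlocks_add]
  simp

theorem stmt_15 (n1 n2 s m p q : ℕ) (hs : 1 ≤ s)
    (E A : Matrix (Fin (n1 + n2)) (Fin (n1 + n2)) ℝ)
    (B : Matrix (Fin (n1 + n2)) (Fin m) ℝ)
    (F : Matrix (Fin (n1 + n2)) (Fin q) ℝ) (hF : F.rank = q)
    (C : Matrix (Fin p) (Fin (n1 + n2)) ℝ)
    (S P : Matrix (Fin (n1 + n2)) (Fin (n1 + n2)) ℝ)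
    (hS : IsUnit S) (hP : IsUnit P)
    (A1 : Matrix (Fin n1) (Fin n1) ℝ) (R : Matrix (Fin n2) (Fin n2) ℝ)
    (B1 : Matrix (Fin n1) (Fin m) ℝ) (B2 : Matrix (Fin n2) (Fin m) ℝ)
    (F1 : Matrix (Fin n1) (Fin q) ℝ) (F2 : Matrix (Fin n2) (Fin q) ℝ)
    (C1 : Matrix (Fin p) (Fin n1) ℝ) (C2 : Matrix (Fin p) (Fin n2) ℝ)
    (hR : R ^ s = 0)
    (hE : (S * E * P).submatrix ⇑finSumFinEquiv ⇑finSumFinEquiv = Matrix.fromBlocks 1 0 0 R)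
    (hA : (S * A * P).submatrix ⇑finSumFinEquiv ⇑finSumFinEquiv = Matrix.fromBlocks A1 0 0 1)
    (hB : (S * B).submatrix ⇑finSumFinEquiv id = Matrix.fromRows B1 B2)
    (hFdec : (S * F).submatrix ⇑finSumFinEquiv id = Matrix.fromRows F1 F2)
    (hC : (C * P).submatrix id ⇑finSumFinEquiv = Matrix.fromCols C1 C2)
    :
    (Matrix.fromBlocks E F C 0).rank
      = n1 + (Matrix.fromBlocks R F2 C2 (-(C1 * F1))).rank :=
  stmt_15_general n1 n2 p q E F C S P hS hP R F1 F2 C1 C2 hE hFdec hC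
end
end

section
/- Assume the unknown-input Weierstrass decomposition and unknown-input historical data hypotheses. If rank col(X_p, U_p, Y_f) = n + m + q, then the (n+p) × (n+q) block matrix [[E, F], [C, 0]] has rank n + q. -/
open Matrix

noncomputable section

/-! Every data column `(x(k), u(k), y(k+1))` is the image of `(z₁(k), u(k), z₂(k+1), η(k))`
under one linear map on a space of dimension `n + m + q`: the slow state runs forwards, and since
`R` is nilpotent the fast state satisfies the backward recursion
`z₂(k) = R z₂(k+1) - B₂ u(k) - F₂ η(k)`. The rank hypothesis therefore makes this map injective.
If `[[E, F], [C, 0]] (x, η) = 0` and `x = P (w₁, w₂)`, the Weierstrass form gives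
`w₁ = -F₁ η` and `R w₂ = -F₂ η`, so `(0, 0, -w₂, η)` lies in the kernel of the map; hence
`w₂ = 0`, `η = 0`, `w₁ = 0`, and the block matrix has full column rank `n + q`. -/
section LinearAlgebra

variable {K V : Type*} [Field K] [AddCommGroup V] [Module K V] [FiniteDimensional K V]
  {ρ τ : Type*} [Fintype τ]

theorem Matrix.rank_eq_card_of_mulVec_eq_zero [Fintype ρ] {M : Matrix ρ τ K}
    (h : ∀ v, M *ᵥ v = 0 → v = 0) : M.rank = Fintype.card τ := by
  have hinj : Function.Injective M.mulVecLin :=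
    (injective_iff_map_eq_zero _).mpr h
  rw [Matrix.rank, LinearMap.finrank_range_of_inj hinj, Module.finrank_fintype_fun_eq_card]

theorem LinearMap.ker_eq_bot_of_rank_eq_of_cols_mem_range {D : Matrix ρ τ K}
    {f : V →ₗ[K] (ρ → K)} (hcols : ∀ k, Dᵀ k ∈ LinearMap.range f)
    (hrank : D.rank = Module.finrank K V) : LinearMap.ker f = ⊥ := by
  have hspan : Submodule.span K (Set.range Dᵀ) ≤ LinearMap.range f :=
    Submodule.span_le.mpr (Set.range_subset_iff.mpr hcols)
  have hle : D.rank ≤ Module.finrank K (LinearMap.range f) := by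
    rw [Matrix.rank_eq_finrank_span_cols]
    exact Submodule.finrank_mono hspan
  rw [← Submodule.finrank_eq_zero]
  have := LinearMap.finrank_range_add_finrank_ker f
  omega

end LinearAlgebra

theorem Matrix.sum_pow_mulVec_telescope {K ι : Type*} [CommRing K] [Fintype ι] [DecidableEq ι]
    (R : Matrix ι ι K) (v : ℕ → ι → K) (k s : ℕ) :
    ∑ j ∈ Finset.range s, R ^ j *ᵥ v (k + j) + R ^ s *ᵥ v (k + s)
      = v k + R *ᵥ ∑ j ∈ Finset.range s, R ^ j *ᵥ v (k + 1 + j) := by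
  induction s with
  | zero => simp
  | succ s ih =>
    rw [Finset.sum_range_succ, Finset.sum_range_succ, Matrix.mulVec_add, ih,
      Matrix.mulVec_mulVec, ← pow_succ', add_right_comm k 1 s]
    simp only [add_assoc]

theorem Matrix.neg_sum_pow_mulVec_eq_of_pow_eq_zero {K ι : Type*} [CommRing K] [Fintype ι]
    [DecidableEq ι] {R : Matrix ι ι K} {s : ℕ} (hR : R ^ s = 0) (v : ℕ → ι → K) (k : ℕ) :
    -∑ j ∈ Finset.range s, R ^ j *ᵥ v (k + j)
      = R *ᵥ -∑ j ∈ Finset.range s, R ^ j *ᵥ v (k + 1 + j) - v k := by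
  have h := R.sum_pow_mulVec_telescope v k s
  rw [hR, Matrix.zero_mulVec, add_zero] at h
  rw [h, Matrix.mulVec_neg]
  abel

section WeierstrassForm

variable {K : Type*} [CommRing K] {ν μ π κ ι₁ ι₂ : Type*}
  [Fintype ν] [Fintype μ] [Fintype κ] [Fintype ι₁] [Fintype ι₂]
  (P₁ : Matrix ν ι₁ K) (P₂ : Matrix ν ι₂ K) (C : Matrix π ν K)
  (A₁ : Matrix ι₁ ι₁ K) (R : Matrix ι₂ ι₂ K) (B₁ : Matrix ι₁ μ K) (B₂ : Matrix ι₂ μ K)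
  (F₁ : Matrix ι₁ κ K) (F₂ : Matrix ι₂ κ K)

/-- `(z₁(k), u(k), z₂(k+1), η(k)) ↦ (x(k), u(k), y(k+1))` in Weierstrass coordinates
`x = P₁ z₁ + P₂ z₂`. -/
def dataMap : (ι₁ → K) × (μ → K) × (ι₂ → K) × (κ → K) →ₗ[K] (ν ⊕ μ ⊕ π → K) where
  toFun θ := Sum.elim (P₁ *ᵥ θ.1 + P₂ *ᵥ (R *ᵥ θ.2.2.1 - B₂ *ᵥ θ.2.1 - F₂ *ᵥ θ.2.2.2))
    (Sum.elim θ.2.1 (C *ᵥ (P₁ *ᵥ (A₁ *ᵥ θ.1 + B₁ *ᵥ θ.2.1 + F₁ *ᵥ θ.2.2.2) + P₂ *ᵥ θ.2.2.1)))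
  map_add' θ θ' := by
    ext (i | i | i) <;>
      simp only [Prod.fst_add, Prod.snd_add, Matrix.mulVec_add, Matrix.mulVec_sub,
        Sum.elim_inl, Sum.elim_inr, Pi.add_apply, Pi.sub_apply] <;> ring
  map_smul' c θ := by
    ext (i | i | i) <;>
      simp only [Prod.smul_fst, Prod.smul_snd, Matrix.mulVec_smul, ← smul_add, ← smul_sub,
        Sum.elim_inl, Sum.elim_inr, Pi.smul_apply, RingHom.id_apply]

theorem dataMap_apply (z₁ : ι₁ → K) (u : μ → K) (z₂ : ι₂ → K) (η : κ → K) :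
    dataMap P₁ P₂ C A₁ R B₁ B₂ F₁ F₂ (z₁, u, z₂, η)
      = Sum.elim (P₁ *ᵥ z₁ + P₂ *ᵥ (R *ᵥ z₂ - B₂ *ᵥ u - F₂ *ᵥ η))
          (Sum.elim u (C *ᵥ (P₁ *ᵥ (A₁ *ᵥ z₁ + B₁ *ᵥ u + F₁ *ᵥ η) + P₂ *ᵥ z₂))) :=
  rfl

variable {P₁ P₂ C R F₁ F₂}

theorem weierstrass_components_of_mulVec_eq_zero [DecidableEq ι₁] {S : Matrix (ι₁ ⊕ ι₂) ν K}
    {E : Matrix ν ν K} {F : Matrix ν κ K} (hE : S * E * fromCols P₁ P₂ = fromBlocks 1 0 0 R)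
    (hF : S * F = fromRows F₁ F₂) {w₁ : ι₁ → K} {w₂ : ι₂ → K} {η : κ → K}
    (h : E *ᵥ (P₁ *ᵥ w₁ + P₂ *ᵥ w₂) + F *ᵥ η = 0) :
    w₁ + F₁ *ᵥ η = 0 ∧ R *ᵥ w₂ + F₂ *ᵥ η = 0 := by
  rw [← fromCols_mulVec_sumElim P₁ P₂] at h
  have hS := congrArg (S *ᵥ ·) h
  rw [Matrix.mulVec_add, Matrix.mulVec_mulVec, Matrix.mulVec_mulVec, Matrix.mulVec_mulVec,
    hE, hF, fromBlocks_mulVec, fromRows_mulVec, Matrix.mulVec_zero] at hS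
  rw [← Sum.elim_add_add, ← Sum.elim_zero_zero, Sum.elim_eq_iff] at hS
  simpa using hS

theorem dataMap_neg_fast_eq_zero {w₁ : ι₁ → K} {w₂ : ι₂ → K} {η : κ → K}
    (h₁ : w₁ + F₁ *ᵥ η = 0) (h₂ : R *ᵥ w₂ + F₂ *ᵥ η = 0) (hC : C *ᵥ (P₁ *ᵥ w₁ + P₂ *ᵥ w₂) = 0) :
    dataMap P₁ P₂ C A₁ R B₁ B₂ F₁ F₂ (0, 0, -w₂, η) = 0 := by
  have hslow : A₁ *ᵥ 0 + B₁ *ᵥ 0 + F₁ *ᵥ η = -w₁ := by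
    rw [Matrix.mulVec_zero, Matrix.mulVec_zero, zero_add, zero_add]
    exact eq_neg_of_add_eq_zero_right h₁
  have hfast : R *ᵥ -w₂ - B₂ *ᵥ 0 - F₂ *ᵥ η = 0 := by
    rw [Matrix.mulVec_neg, Matrix.mulVec_zero, sub_zero, ← neg_add', h₂, neg_zero]
  rw [dataMap_apply, hslow, hfast, Matrix.mulVec_neg, Matrix.mulVec_neg, ← neg_add,
    Matrix.mulVec_neg, hC]
  simp

variable {A₁ B₁ B₂}

theorem eq_zero_of_fromBlocks_mulVec_eq_zero [DecidableEq ι₁] {S : Matrix (ι₁ ⊕ ι₂) ν K}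
    {E : Matrix ν ν K} {F : Matrix ν κ K} (hE : S * E * fromCols P₁ P₂ = fromBlocks 1 0 0 R)
    (hF : S * F = fromRows F₁ F₂) (hP : Function.Surjective (fromCols P₁ P₂).mulVec)
    (hinj : LinearMap.ker (dataMap P₁ P₂ C A₁ R B₁ B₂ F₁ F₂) = ⊥) {v : ν ⊕ κ → K}
    (hv : fromBlocks E F C 0 *ᵥ v = 0) : v = 0 := by
  obtain ⟨w, hw⟩ := hP (v ∘ Sum.inl)
  rw [fromBlocks_mulVec, Matrix.zero_mulVec, add_zero, ← Sum.elim_zero_zero, Sum.elim_eq_iff,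
    ← hw, fromCols_mulVec] at hv
  obtain ⟨h₁, h₂⟩ := weierstrass_components_of_mulVec_eq_zero hE hF hv.1
  have hθ := dataMap_neg_fast_eq_zero A₁ B₁ B₂ h₁ h₂ hv.2
  rw [← LinearMap.mem_ker, hinj, Submodule.mem_bot] at hθ
  simp only [Prod.mk_eq_zero, neg_eq_zero, true_and] at hθ
  obtain ⟨hw₂, hη⟩ := hθ
  rw [hη, Matrix.mulVec_zero, add_zero] at h₁
  rw [← Sum.elim_comp_inl_inr v, ← hw, ← Sum.elim_comp_inl_inr w, h₁, hw₂, hη,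
    Sum.elim_zero_zero, Matrix.mulVec_zero, Sum.elim_zero_zero]

end WeierstrassForm

theorem histMat_cols_mem_range_dataMap {ν μ π κ ι₁ ι₂ : Type} [Fintype ν] [Fintype μ]
    [Fintype κ] [Fintype ι₁] [Fintype ι₂] {T : ℕ} {P₁ : Matrix ν ι₁ ℝ} {P₂ : Matrix ν ι₂ ℝ}
    {C : Matrix π ν ℝ} {A₁ : Matrix ι₁ ι₁ ℝ} {R : Matrix ι₂ ι₂ ℝ} {B₁ : Matrix ι₁ μ ℝ}
    {B₂ : Matrix ι₂ μ ℝ} {F₁ : Matrix ι₁ κ ℝ} {F₂ : Matrix ι₂ κ ℝ} {x : ℕ → ν → ℝ}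
    {u : ℕ → μ → ℝ} {y : ℕ → π → ℝ} {z₁ : ℕ → ι₁ → ℝ} {z₂ : ℕ → ι₂ → ℝ} {η : ℕ → κ → ℝ}
    (hz₁ : ∀ k < T, z₁ (k + 1) = A₁ *ᵥ z₁ k + B₁ *ᵥ u k + F₁ *ᵥ η k)
    (hz₂ : ∀ k < T, z₂ k = R *ᵥ z₂ (k + 1) - B₂ *ᵥ u k - F₂ *ᵥ η k)
    (hx : ∀ k ≤ T, x k = P₁ *ᵥ z₁ k + P₂ *ᵥ z₂ k) (hy : ∀ k ≤ T, y k = C *ᵥ x k) (k : Fin T) :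
    (fromRows (histMat T x 0) (fromRows (histMat T u 0) (histMat T y 1)))ᵀ k
      ∈ LinearMap.range (dataMap P₁ P₂ C A₁ R B₁ B₂ F₁ F₂) := by
  refine ⟨(z₁ k, u k, z₂ (k + 1), η k), ?_⟩
  rw [dataMap_apply, ← hz₁ k k.2, ← hz₂ k k.2, ← hx k k.2.le, ← hx (k + 1) k.2,
    ← hy (k + 1) k.2]
  ext (i | i | i) <;> rfl

theorem stmt_17_general (n1 n2 s m p q T : ℕ)
    (E : Matrix (Fin (n1 + n2)) (Fin (n1 + n2)) ℝ)
    (F : Matrix (Fin (n1 + n2)) (Fin q) ℝ)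
    (C : Matrix (Fin p) (Fin (n1 + n2)) ℝ)
    (S P : Matrix (Fin (n1 + n2)) (Fin (n1 + n2)) ℝ)
    (hP : IsUnit P)
    (A1 : Matrix (Fin n1) (Fin n1) ℝ) (R : Matrix (Fin n2) (Fin n2) ℝ)
    (B1 : Matrix (Fin n1) (Fin m) ℝ) (B2 : Matrix (Fin n2) (Fin m) ℝ)
    (F1 : Matrix (Fin n1) (Fin q) ℝ) (F2 : Matrix (Fin n2) (Fin q) ℝ)
    (hR : R ^ s = 0)
    (hE : (S * E * P).submatrix ⇑finSumFinEquiv ⇑finSumFinEquiv = Matrix.fromBlocks 1 0 0 R)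
    (hFdec : (S * F).submatrix ⇑finSumFinEquiv id = Matrix.fromRows F1 F2)
    (ud : ℕ → Fin m → ℝ) (etad : ℕ → Fin q → ℝ)
    (z1d : ℕ → Fin n1 → ℝ) (z2d : ℕ → Fin n2 → ℝ)
    (xd : ℕ → Fin (n1 + n2) → ℝ) (yd : ℕ → Fin p → ℝ)
    (hz1 : ∀ k < T, z1d (k + 1) = A1 *ᵥ z1d k + B1 *ᵥ ud k + F1 *ᵥ etad k)
    (hz2 : ∀ k ≤ T, z2d k
      = -(∑ j ∈ Finset.range s, (R ^ j *ᵥ (B2 *ᵥ ud (k + j) + F2 *ᵥ etad (k + j)))))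
    (hxd : ∀ k ≤ T, xd k = P *ᵥ (fun i => Sum.elim (z1d k) (z2d k) (finSumFinEquiv.symm i)))
    (hyd : ∀ k ≤ T, yd k = C *ᵥ xd k)
    (hrk : (Matrix.fromRows (histMat T xd 0)
      (Matrix.fromRows (histMat T ud 0) (histMat T yd 1))).rank = (n1 + n2) + m + q) :
    (Matrix.fromBlocks E F C 0).rank = (n1 + n2) + q := by
  set P' := P.submatrix id finSumFinEquiv
  have hP' : Function.Surjective (fromCols P'.toCols₁ P'.toCols₂).mulVec := by
    rw [fromCols_toCols]
    intro x
    obtain ⟨w, hw⟩ := Matrix.mulVec_surjective_iff_isUnit.mpr hP x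
    exact ⟨w ∘ finSumFinEquiv, by simpa [P', submatrix_mulVec_equiv, Function.comp_assoc] using hw⟩
  have hE' : S.submatrix finSumFinEquiv id * E * fromCols P'.toCols₁ P'.toCols₂
      = fromBlocks 1 0 0 R := by
    rw [fromCols_toCols, ← hE, submatrix_mul _ P _ id _ Function.bijective_id,
      submatrix_mul S E _ id _ Function.bijective_id, submatrix_id_id]
  have hF' : S.submatrix finSumFinEquiv id * F = fromRows F1 F2 := by
    rw [← hFdec, submatrix_mul S F _ id _ Function.bijective_id, submatrix_id_id]
  have hz2' : ∀ k < T, z2d k = R *ᵥ z2d (k + 1) - B2 *ᵥ ud k - F2 *ᵥ etad k := fun k hk => by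
    rw [hz2 k hk.le, hz2 (k + 1) hk, Matrix.neg_sum_pow_mulVec_eq_of_pow_eq_zero hR
      (fun k => B2 *ᵥ ud k + F2 *ᵥ etad k), sub_add_eq_sub_sub]
  have hxd' : ∀ k ≤ T, xd k = P'.toCols₁ *ᵥ z1d k + P'.toCols₂ *ᵥ z2d k := fun k hk => by
    rw [hxd k hk, ← fromCols_mulVec_sumElim, fromCols_toCols, submatrix_mulVec_equiv]
    rfl
  have hinj := LinearMap.ker_eq_bot_of_rank_eq_of_cols_mem_range
    (histMat_cols_mem_range_dataMap hz1 hz2' hxd' hyd) (by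
      rw [hrk]
      simp only [Module.finrank_prod, Module.finrank_fintype_fun_eq_card, Fintype.card_fin]
      ring)
  rw [Matrix.rank_eq_card_of_mulVec_eq_zero
    (fun _ => eq_zero_of_fromBlocks_mulVec_eq_zero hE' hF' hP' hinj)]
  simp

theorem stmt_17 (n1 n2 s m p q T : ℕ) (hs : 1 ≤ s) (hT : 1 ≤ T)
    (E A : Matrix (Fin (n1 + n2)) (Fin (n1 + n2)) ℝ)
    (B : Matrix (Fin (n1 + n2)) (Fin m) ℝ)
    (F : Matrix (Fin (n1 + n2)) (Fin q) ℝ) (hF : F.rank = q)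
    (C : Matrix (Fin p) (Fin (n1 + n2)) ℝ)
    (S P : Matrix (Fin (n1 + n2)) (Fin (n1 + n2)) ℝ)
    (hS : IsUnit S) (hP : IsUnit P)
    (A1 : Matrix (Fin n1) (Fin n1) ℝ) (R : Matrix (Fin n2) (Fin n2) ℝ)
    (B1 : Matrix (Fin n1) (Fin m) ℝ) (B2 : Matrix (Fin n2) (Fin m) ℝ)
    (F1 : Matrix (Fin n1) (Fin q) ℝ) (F2 : Matrix (Fin n2) (Fin q) ℝ)
    (C1 : Matrix (Fin p) (Fin n1) ℝ) (C2 : Matrix (Fin p) (Fin n2) ℝ)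
    (hR : R ^ s = 0)
    (hE : (S * E * P).submatrix ⇑finSumFinEquiv ⇑finSumFinEquiv = Matrix.fromBlocks 1 0 0 R)
    (hA : (S * A * P).submatrix ⇑finSumFinEquiv ⇑finSumFinEquiv = Matrix.fromBlocks A1 0 0 1)
    (hB : (S * B).submatrix ⇑finSumFinEquiv id = Matrix.fromRows B1 B2)
    (hFdec : (S * F).submatrix ⇑finSumFinEquiv id = Matrix.fromRows F1 F2)
    (hC : (C * P).submatrix id ⇑finSumFinEquiv = Matrix.fromCols C1 C2)
    (ud : ℕ → Fin m → ℝ) (etad : ℕ → Fin q → ℝ)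
    (z1d : ℕ → Fin n1 → ℝ) (z2d : ℕ → Fin n2 → ℝ)
    (xd : ℕ → Fin (n1 + n2) → ℝ) (yd : ℕ → Fin p → ℝ)
    (hz1 : ∀ k < T, z1d (k + 1) = A1 *ᵥ z1d k + B1 *ᵥ ud k + F1 *ᵥ etad k)
    (hz2 : ∀ k ≤ T, z2d k
      = -(∑ j ∈ Finset.range s, (R ^ j *ᵥ (B2 *ᵥ ud (k + j) + F2 *ᵥ etad (k + j)))))
    (hxd : ∀ k ≤ T, xd k = P *ᵥ (fun i => Sum.elim (z1d k) (z2d k) (finSumFinEquiv.symm i)))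
    (hyd : ∀ k ≤ T, yd k = C *ᵥ xd k)
    (hrk : (Matrix.fromRows (histMat T xd 0)
      (Matrix.fromRows (histMat T ud 0) (histMat T yd 1))).rank = (n1 + n2) + m + q) :
    (Matrix.fromBlocks E F C 0).rank = (n1 + n2) + q :=
  stmt_17_general n1 n2 s m p q T E F C S P hP A1 R B1 B2 F1 F2 hR hE hFdec ud etad z1d z2d xd yd
    hz1 hz2 hxd hyd hrk
end
end
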